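/- arXiv:1410.7404 — 2 statements merged into one kernel-verified Lean document; each statement's English description precedes it below -/
import Mathlib

section
/- (Bounds on H(X)) If Y^{1:r} = (Y^1,...,Y^r) is a hierarchical representation of X = (X_1,...,X_n) with Y^0 := X and all variables discrete (finite-valued), then H(X) ≤ Σ_{i=1}^n H(X_i) − Σ_{k=1}^r TC_L(Y^{k-1};Y^k); and if moreover the top layer consists of a single variable (m_r = 1), then H(X) ≥ Σ_{i=1}^n H(X_i) − Σ_{k=1}^r ( TC_L(Y^{k-1};Y^k) + Σ_{i=1}^{m_{k-1}} H(Y^{k-1}_i | Y^k) ). -/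
open Finset

/-- Probability that the random variable `f` (on finite sample space `Ω` with pmf `p`)
takes the value `a`. -/
noncomputable def prob {Ω α : Type} [Fintype Ω] [DecidableEq α]
    (p : Ω → ℝ) (f : Ω → α) (a : α) : ℝ :=
  ∑ ω : Ω, if f ω = a then p ω else 0

/-- Shannon entropy (in nats) of the random variable `f`. -/
noncomputable def ent {Ω α : Type} [Fintype Ω] [Fintype α] [DecidableEq α]
    (p : Ω → ℝ) (f : Ω → α) : ℝ :=
  -∑ a : α, prob p f a * Real.log (prob p f a)

/-- Mutual information `I(f : g)`. -/
noncomputable def mi {Ω α β : Type} [Fintype Ω] [Fintype α] [DecidableEq α]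
    [Fintype β] [DecidableEq β] (p : Ω → ℝ) (f : Ω → α) (g : Ω → β) : ℝ :=
  ent p f + ent p g - ent p (fun ω => (f ω, g ω))

/-- Conditional entropy `H(f | g)`. -/
noncomputable def condEnt {Ω α β : Type} [Fintype Ω] [Fintype α] [DecidableEq α]
    [Fintype β] [DecidableEq β] (p : Ω → ℝ) (f : Ω → α) (g : Ω → β) : ℝ :=
  ent p (fun ω => (f ω, g ω)) - ent p g

/-- Conditional mutual information `I(f : g | h)`. -/
noncomputable def condMI {Ω α β γ : Type} [Fintype Ω] [Fintype α] [DecidableEq α]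
    [Fintype β] [DecidableEq β] [Fintype γ] [DecidableEq γ]
    (p : Ω → ℝ) (f : Ω → α) (g : Ω → β) (h : Ω → γ) : ℝ :=
  condEnt p f h + condEnt p g h - condEnt p (fun ω => (f ω, g ω)) h

/-- The joint random variable of a finite family of random variables. -/
def joint {Ω : Type} {n : ℕ} {V : Fin n → Type} (X : ∀ i, Ω → V i) : Ω → (∀ i, V i) :=
  fun ω i => X i ω

/-- Total correlation `TC(X) = ∑ᵢ H(Xᵢ) − H(X)`. -/
noncomputable def tc {Ω : Type} [Fintype Ω] {n : ℕ} {V : Fin n → Type}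
    [∀ i, Fintype (V i)] [∀ i, DecidableEq (V i)]
    (p : Ω → ℝ) (X : ∀ i, Ω → V i) : ℝ :=
  (∑ i, ent p (X i)) - ent p (joint X)

/-- Conditional total correlation `TC(X|g) = ∑ᵢ H(Xᵢ|g) − H(X|g)`. -/
noncomputable def tcCond {Ω : Type} [Fintype Ω] {n : ℕ} {V : Fin n → Type}
    [∀ i, Fintype (V i)] [∀ i, DecidableEq (V i)]
    {β : Type} [Fintype β] [DecidableEq β]
    (p : Ω → ℝ) (X : ∀ i, Ω → V i) (g : Ω → β) : ℝ :=
  (∑ i, condEnt p (X i) g) - condEnt p (joint X) g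

/-- `Y = (Y₁,…,Y_m)` is a representation of (the random variable) `f`:
the `Yⱼ` are conditionally independent given `f`, i.e.
`p(a,y) = p(a) ∏ⱼ p(yⱼ|a)`, written multiplicatively to avoid division:
`p(a)^(m-1) · p(a,y) = ∏ⱼ p(a,yⱼ)`. -/
def IsRepresentation {Ω : Type} [Fintype Ω] {α : Type} [DecidableEq α]
    {m : ℕ} {W : Fin m → Type} [∀ j, DecidableEq (W j)]
    (p : Ω → ℝ) (f : Ω → α) (Y : ∀ j, Ω → W j) : Prop :=
  ∀ (a : α) (y : ∀ j, W j),
    prob p f a ^ (m - 1) * prob p (fun ω => (f ω, joint Y ω)) (a, y)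
      = ∏ j, prob p (fun ω => (f ω, Y j ω)) (a, y j)

/-- `TC_L(X;Y) = ∑ᵢ I(Y:Xᵢ) − ∑ⱼ I(Yⱼ:X)`. -/
noncomputable def tcL {Ω : Type} [Fintype Ω] {n m : ℕ}
    {V : Fin n → Type} [∀ i, Fintype (V i)] [∀ i, DecidableEq (V i)]
    {W : Fin m → Type} [∀ j, Fintype (W j)] [∀ j, DecidableEq (W j)]
    (p : Ω → ℝ) (X : ∀ i, Ω → V i) (Y : ∀ j, Ω → W j) : ℝ :=
  (∑ i, mi p (joint Y) (X i)) - ∑ j, mi p (Y j) (joint X)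

section Basic
variable {Ω : Type} [Fintype Ω] {α β γ : Type} [DecidableEq α] [DecidableEq β] [DecidableEq γ]

lemma my_prob_nonneg (p : Ω → ℝ) (hp0 : ∀ ω, 0 ≤ p ω) (f : Ω → α) (a : α) :
    0 ≤ prob p f a :=
  Finset.sum_nonneg fun ω _ => by split <;> simp [hp0 ω]

lemma my_sum_prob [Fintype α] (p : Ω → ℝ) (hp1 : ∑ ω, p ω = 1) (f : Ω → α) :
    ∑ a, prob p f a = 1 := by
  unfold prob
  rw [Finset.sum_comm]
  simp [Finset.sum_ite_eq, hp1]

lemma my_prob_comp_sum [Fintype α] (p : Ω → ℝ) (f : Ω → α) (u : α → γ) (c : γ) :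
    prob p (fun ω => u (f ω)) c = ∑ a, if u a = c then prob p f a else 0 := by
  unfold prob
  have step1 : ∀ a : α, (if u a = c then ∑ ω, (if f ω = a then p ω else 0) else 0)
      = ∑ ω, (if f ω = a then (if u a = c then p ω else 0) else 0) := by
    intro a; by_cases h1 : u a = c <;> simp [h1]
  rw [Finset.sum_congr rfl fun a _ => step1 a, Finset.sum_comm]
  refine Finset.sum_congr rfl fun ω _ => ?_
  simp only [Finset.sum_ite_eq, Finset.mem_univ, if_true]

/-- Marginalization: pushing forward along `u`. -/
lemma my_marg [Fintype α] [Fintype γ] (p : Ω → ℝ) (f : Ω → α) (u : α → γ) (φ : γ → ℝ) :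
    ∑ c, prob p (fun ω => u (f ω)) c * φ c = ∑ a, prob p f a * φ (u a) := by
  simp only [my_prob_comp_sum p f u, Finset.sum_mul, ite_mul, zero_mul]
  rw [Finset.sum_comm]
  refine Finset.sum_congr rfl fun a _ => ?_
  simp [Finset.sum_ite_eq]

lemma my_prob_comp_le (p : Ω → ℝ) (hp0 : ∀ ω, 0 ≤ p ω) (f : Ω → α) (u : α → γ) (a : α) :
    prob p f a ≤ prob p (fun ω => u (f ω)) (u a) := by
  refine Finset.sum_le_sum fun ω _ => ?_
  dsimp only
  by_cases h : f ω = a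
  · simp [h]
  · simp only [h, if_false]
    split <;> [exact hp0 ω; exact le_refl 0]

lemma my_prob_comp_inj (p : Ω → ℝ) (f : Ω → α) (u : α → γ) (hu : Function.Injective u) (a : α) :
    prob p (fun ω => u (f ω)) (u a) = prob p f a := by
  refine Finset.sum_congr rfl fun ω _ => ?_
  simp only [hu.eq_iff]

end Basic
section Ent
variable {Ω : Type} [Fintype Ω] {α β γ : Type} [DecidableEq α] [DecidableEq β] [DecidableEq γ]

lemma my_ent_comp_inj [Fintype α] [Fintype γ] (p : Ω → ℝ) (f : Ω → α) (u : α → γ)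
    (hu : Function.Injective u) : ent p (fun ω => u (f ω)) = ent p f := by
  unfold ent
  congr 1
  rw [← Finset.sum_subset (Finset.subset_univ (Finset.image u Finset.univ))]
  · rw [Finset.sum_image (fun a _ b _ h => hu h)]
    exact Finset.sum_congr rfl fun a _ => by rw [my_prob_comp_inj p f u hu]
  · intro c _ hc
    have : prob p (fun ω => u (f ω)) c = 0 := by
      refine Finset.sum_eq_zero fun ω _ => ?_
      have : u (f ω) ≠ c := fun h => hc (by rw [← h]; exact Finset.mem_image_of_mem u (Finset.mem_univ _))
      simp [this]
    simp [this]

lemma my_ent_comp_le [Fintype α] [Fintype γ] (p : Ω → ℝ) (hp0 : ∀ ω, 0 ≤ p ω)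
    (f : Ω → α) (u : α → γ) : ent p (fun ω => u (f ω)) ≤ ent p f := by
  unfold ent
  rw [neg_le_neg_iff]
  rw [my_marg p f u (fun c => Real.log (prob p (fun ω => u (f ω)) c))]
  refine Finset.sum_le_sum fun a _ => ?_
  rcases (my_prob_nonneg p hp0 f a).lt_or_eq with h | h
  · refine mul_le_mul_of_nonneg_left ?_ h.le
    exact Real.log_le_log h (my_prob_comp_le p hp0 f u a)
  · rw [← h]; simp

lemma my_ent_pair_swap [Fintype α] [Fintype β] (p : Ω → ℝ) (f : Ω → α) (g : Ω → β) :
    ent p (fun ω => (f ω, g ω)) = ent p (fun ω => (g ω, f ω)) := by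
  have := my_ent_comp_inj p (fun ω => (f ω, g ω)) Prod.swap Prod.swap_injective
  exact this.symm

lemma my_condEnt_nonneg [Fintype α] [Fintype β] (p : Ω → ℝ) (hp0 : ∀ ω, 0 ≤ p ω)
    (f : Ω → α) (g : Ω → β) : 0 ≤ condEnt p f g := by
  have := my_ent_comp_le p hp0 (fun ω => (f ω, g ω)) Prod.snd
  unfold condEnt
  linarith [this]

/-- Gibbs' inequality. -/
lemma my_gibbs {ι : Type} [Fintype ι] (P Q : ι → ℝ) (hP : ∀ a, 0 ≤ P a) (hQ : ∀ a, 0 ≤ Q a)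
    (hsum : ∑ a, Q a ≤ ∑ a, P a) (habs : ∀ a, 0 < P a → 0 < Q a) :
    ∑ a, P a * Real.log (Q a) ≤ ∑ a, P a * Real.log (P a) := by
  have key : ∀ a, P a * Real.log (Q a) - P a * Real.log (P a) ≤ Q a - P a := by
    intro a
    rcases (hP a).lt_or_eq with h | h
    · have hq := habs a h
      have : Real.log (Q a) - Real.log (P a) = Real.log (Q a / P a) := by
        rw [Real.log_div hq.ne' h.ne']
      have hlog := Real.log_le_sub_one_of_pos (div_pos hq h)
      calc P a * Real.log (Q a) - P a * Real.log (P a)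
          = P a * (Real.log (Q a / P a)) := by rw [← this]; ring
        _ ≤ P a * (Q a / P a - 1) := mul_le_mul_of_nonneg_left hlog h.le
        _ = Q a - P a := by field_simp
    · rw [← h]; simp [hQ a]
  have := Finset.sum_le_sum (fun a (_ : a ∈ Finset.univ) => key a)
  rw [Finset.sum_sub_distrib] at this
  rw [Finset.sum_sub_distrib] at this
  linarith

lemma my_prob_pair_fst [Fintype β] (p : Ω → ℝ) (f : Ω → α) (g : Ω → β) (a : α) :
    prob p f a = ∑ b, prob p (fun ω => (f ω, g ω)) (a, b) := by
  unfold prob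
  rw [Finset.sum_comm]
  refine Finset.sum_congr rfl fun ω _ => ?_
  simp only [Prod.mk.injEq]
  by_cases h : f ω = a
  · simp [h, Finset.sum_ite_eq, ite_and]
  · simp [h]

lemma my_prob_pair_snd [Fintype α] (p : Ω → ℝ) (f : Ω → α) (g : Ω → β) (b : β) :
    prob p g b = ∑ a, prob p (fun ω => (f ω, g ω)) (a, b) := by
  unfold prob
  rw [Finset.sum_comm]
  refine Finset.sum_congr rfl fun ω _ => ?_
  simp only [Prod.mk.injEq]
  by_cases h : g ω = b
  · simp [h, Finset.sum_ite_eq, ite_and]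
  · simp [h]

end Ent
section TCCond
variable {Ω : Type} [Fintype Ω]

lemma my_condEnt_empty {V : Fin 0 → Type} [∀ i, Fintype (V i)] [∀ i, DecidableEq (V i)]
    {β : Type} [Fintype β] [DecidableEq β] (p : Ω → ℝ) (X : ∀ i, Ω → V i) (g : Ω → β) :
    condEnt p (joint X) g = 0 := by
  have hu : Function.Injective (fun b : β => ((fun i : Fin 0 => i.elim0 : ∀ i, V i), b)) :=
    fun b b' h => congrArg Prod.snd h
  have := my_ent_comp_inj p g _ hu
  have heq : (fun ω => ((fun i : Fin 0 => i.elim0 : ∀ i, V i), g ω))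
      = (fun ω => (joint X ω, g ω)) := by
    funext ω
    exact Prod.ext (Subsingleton.elim _ _) rfl
  rw [heq] at this
  unfold condEnt
  rw [this]
  ring

lemma my_tcCond_nonneg {n : ℕ} {V : Fin n → Type} [∀ i, Fintype (V i)] [∀ i, DecidableEq (V i)]
    {β : Type} [Fintype β] [DecidableEq β]
    (p : Ω → ℝ) (hp0 : ∀ ω, 0 ≤ p ω) (hp1 : ∑ ω, p ω = 1)
    (X : ∀ i, Ω → V i) (g : Ω → β) : 0 ≤ tcCond p X g := by
  rcases Nat.eq_zero_or_pos n with hn | hn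
  · subst hn
    unfold tcCond
    rw [my_condEnt_empty p X g]
    simp
  -- main case
  set JP : ((∀ i, V i) × β) → ℝ := prob p (fun ω => (joint X ω, g ω)) with hJP
  set q : β → ℝ := prob p g with hq
  set pp : ∀ i, (V i × β) → ℝ := fun i => prob p (fun ω => (X i ω, g ω)) with hpp
  set Q : ((∀ i, V i) × β) → ℝ := fun z => (∏ i, pp i (z.1 i, z.2)) / q z.2 ^ (n - 1) with hQ
  have hJP0 : ∀ z, 0 ≤ JP z := fun z => my_prob_nonneg p hp0 _ z
  have hq0 : ∀ b, 0 ≤ q b := fun b => my_prob_nonneg p hp0 _ b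
  have hpp0 : ∀ i w, 0 ≤ pp i w := fun i w => my_prob_nonneg p hp0 _ w
  have hle_pi : ∀ z : (∀ i, V i) × β, ∀ i, JP z ≤ pp i (z.1 i, z.2) := by
    intro z i
    have := my_prob_comp_le p hp0 (fun ω => (joint X ω, g ω))
      (fun w => (w.1 i, w.2)) z
    exact this
  have hle_q : ∀ z : (∀ i, V i) × β, JP z ≤ q z.2 := by
    intro z
    have := my_prob_comp_le p hp0 (fun ω => (joint X ω, g ω)) Prod.snd z
    exact this
  have hQ0 : ∀ z, 0 ≤ Q z := fun z =>
    div_nonneg (Finset.prod_nonneg fun i _ => hpp0 i _) (pow_nonneg (hq0 _) _)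
  have habs : ∀ z, 0 < JP z → 0 < Q z := by
    intro z hz
    refine div_pos (Finset.prod_pos fun i _ => lt_of_lt_of_le hz (hle_pi z i)) ?_
    exact pow_pos (lt_of_lt_of_le hz (hle_q z)) _
  have hmargq : ∀ i b, ∑ a : V i, pp i (a, b) = q b := fun i b =>
    (my_prob_pair_snd p (X i) g b).symm
  have hsumQ : ∑ z, Q z ≤ ∑ z, JP z := by
    rw [my_sum_prob p hp1]
    rw [Fintype.sum_prod_type_right]
    have inner : ∀ b, (∑ v : ∀ i, V i, Q (v, b)) ≤ q b := by
      intro b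
      have hprodsum : ∑ v : ∀ i, V i, ∏ i, pp i (v i, b) = q b ^ n := by
        have := Finset.prod_univ_sum (fun i : Fin n => (Finset.univ : Finset (V i)))
          (fun i a => pp i (a, b))
        rw [Fintype.piFinset_univ] at this
        rw [← this]
        simp only [hmargq]
        rw [Finset.prod_const, Finset.card_univ, Fintype.card_fin]
      simp only [hQ]
      rw [← Finset.sum_div, hprodsum]
      rcases (hq0 b).lt_or_eq with hb | hb
      · have : q b ^ n / q b ^ (n - 1) = q b := by
          rw [div_eq_iff (pow_ne_zero _ hb.ne'), ← pow_succ']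
          congr 1
          omega
        rw [this]
      · rw [← hb, zero_pow (by omega), zero_div]
    calc ∑ b, ∑ v : ∀ i, V i, Q (v, b) ≤ ∑ b, q b := Finset.sum_le_sum fun b _ => inner b
      _ = 1 := my_sum_prob p hp1 g
  have gibbs := my_gibbs JP Q hJP0 hQ0 hsumQ habs
  -- compute ∑ JP log Q
  have term : ∀ z : (∀ i, V i) × β, JP z * Real.log (Q z)
      = (∑ i, JP z * Real.log (pp i (z.1 i, z.2)))
        - (n - 1 : ℕ) * (JP z * Real.log (q z.2)) := by
    intro z
    rcases (hJP0 z).lt_or_eq with h | h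
    · have hppz : ∀ i, pp i (z.1 i, z.2) ≠ 0 := fun i => (lt_of_lt_of_le h (hle_pi z i)).ne'
      have hqz : q z.2 ≠ 0 := (lt_of_lt_of_le h (hle_q z)).ne'
      have hlog : Real.log (Q z)
          = (∑ i, Real.log (pp i (z.1 i, z.2))) - (n - 1 : ℕ) * Real.log (q z.2) := by
        simp only [hQ]
        rw [Real.log_div (Finset.prod_ne_zero_iff.mpr fun i _ => hppz i) (pow_ne_zero _ hqz),
          Real.log_prod (fun i _ => hppz i), Real.log_pow]
      rw [hlog, mul_sub, Finset.mul_sum]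
      ring
    · rw [← h]; simp
  have hlogQ : ∑ z, JP z * Real.log (Q z)
      = (∑ i, ∑ z : (∀ i, V i) × β, JP z * Real.log (pp i (z.1 i, z.2)))
        - (n - 1 : ℕ) * ∑ z, JP z * Real.log (q z.2) := by
    rw [Finset.sum_congr rfl fun z _ => term z, Finset.sum_sub_distrib, Finset.sum_comm,
      ← Finset.mul_sum]
  -- marginalize
  have hmi : ∀ i, ∑ z : (∀ i, V i) × β, JP z * Real.log (pp i (z.1 i, z.2))
      = ∑ w : V i × β, pp i w * Real.log (pp i w) := by
    intro i
    have := my_marg p (fun ω => (joint X ω, g ω)) (fun z => (z.1 i, z.2))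
      (fun w => Real.log (pp i w))
    exact this.symm
  have hmg : ∑ z : (∀ i, V i) × β, JP z * Real.log (q z.2)
      = ∑ b, q b * Real.log (q b) := by
    have := my_marg p (fun ω => (joint X ω, g ω)) Prod.snd (fun b => Real.log (q b))
    exact this.symm
  rw [hlogQ] at gibbs
  simp only [hmi, hmg] at gibbs
  -- unfold tcCond
  unfold tcCond condEnt ent
  have hcast : ((n - 1 : ℕ) : ℝ) = (n : ℝ) - 1 := by
    rw [Nat.cast_sub hn]; norm_num
  rw [hcast] at gibbs
  have expand : ∑ i, (-∑ w : V i × β, prob p (fun ω => (X i ω, g ω)) w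
        * Real.log (prob p (fun ω => (X i ω, g ω)) w)
      - -∑ b, prob p g b * Real.log (prob p g b))
      = -(∑ i, ∑ w : V i × β, pp i w * Real.log (pp i w))
        + (n : ℝ) * ∑ b, q b * Real.log (q b) := by
    rw [Finset.sum_sub_distrib, Finset.sum_neg_distrib]
    simp only [← hpp, ← hq, Finset.sum_const, Finset.card_univ, Fintype.card_fin, nsmul_eq_mul]
    ring
  rw [expand]
  linarith [gibbs]

end TCCond
section More
variable {Ω : Type} [Fintype Ω]

lemma my_condEnt_const {α : Type} [Fintype α] [DecidableEq α]
    (p : Ω → ℝ) (hp1 : ∑ ω, p ω = 1) (f : Ω → α) :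
    condEnt p f (fun _ : Ω => (0 : Fin 1)) = ent p f := by
  have hg : ent p (fun _ : Ω => (0 : Fin 1)) = 0 := by
    unfold ent prob
    simp [hp1]
  unfold condEnt
  rw [hg, sub_zero]
  exact my_ent_comp_inj p f (fun a => (a, (0 : Fin 1))) (fun a b h => congrArg Prod.fst h)

lemma my_tc_nonneg {n : ℕ} {V : Fin n → Type} [∀ i, Fintype (V i)] [∀ i, DecidableEq (V i)]
    (p : Ω → ℝ) (hp0 : ∀ ω, 0 ≤ p ω) (hp1 : ∑ ω, p ω = 1) (X : ∀ i, Ω → V i) :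
    0 ≤ tc p X := by
  have h := my_tcCond_nonneg p hp0 hp1 X (fun _ : Ω => (0 : Fin 1))
  unfold tcCond at h
  simp only [my_condEnt_const p hp1] at h
  exact h

lemma my_tc_single {n : ℕ} (hn : n = 1) {V : Fin n → Type} [∀ i, Fintype (V i)]
    [∀ i, DecidableEq (V i)] (p : Ω → ℝ) (X : ∀ i, Ω → V i) :
    tc p X = 0 := by
  subst hn
  have hu : Function.Injective (fun v : ∀ i : Fin 1, V i => v 0) := by
    intro x y h
    funext i
    have hi : i = 0 := Subsingleton.elim i 0
    rw [hi]; exact h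
  have := my_ent_comp_inj p (joint X) _ hu
  unfold tc
  rw [Fin.sum_univ_one, ← this]
  have h2 : (fun ω => joint X ω 0) = X 0 := rfl
  rw [h2]
  ring

/-- The key entropy identity from the representation property:
`∑ⱼ H(f,Yⱼ) = H(f,Y) + (m−1)·H(f)`. -/
lemma my_star {α : Type} [Fintype α] [DecidableEq α] {m : ℕ} {W : Fin m → Type}
    [∀ j, Fintype (W j)] [∀ j, DecidableEq (W j)]
    (p : Ω → ℝ) (hp0 : ∀ ω, 0 ≤ p ω) (f : Ω → α) (Y : ∀ j, Ω → W j)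
    (hrep : IsRepresentation p f Y) :
    ∑ j, ent p (fun ω => (f ω, Y j ω))
      = ent p (fun ω => (f ω, joint Y ω)) + ((m - 1 : ℕ) : ℝ) * ent p f := by
  set PJ : (α × (∀ j, W j)) → ℝ := prob p (fun ω => (f ω, joint Y ω)) with hPJ
  set pj : ∀ j, (α × W j) → ℝ := fun j => prob p (fun ω => (f ω, Y j ω)) with hpj
  have hPJ0 : ∀ z, 0 ≤ PJ z := fun z => my_prob_nonneg p hp0 _ z
  have hle_j : ∀ (z : α × (∀ j, W j)) (j), PJ z ≤ pj j (z.1, z.2 j) := fun z j =>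
    my_prob_comp_le p hp0 (fun ω => (f ω, joint Y ω)) (fun z => (z.1, z.2 j)) z
  have hle_f : ∀ z : α × (∀ j, W j), PJ z ≤ prob p f z.1 := fun z =>
    my_prob_comp_le p hp0 (fun ω => (f ω, joint Y ω)) Prod.fst z
  -- marginalization of each pⱼ entropy
  have hmarg : ∀ j, ∑ w : α × W j, pj j w * Real.log (pj j w)
      = ∑ z : α × (∀ j, W j), PJ z * Real.log (pj j (z.1, z.2 j)) :=
    fun j => my_marg p (fun ω => (f ω, joint Y ω)) (fun z => (z.1, z.2 j))
      (fun w => Real.log (pj j w))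
  have hmargf : ∑ a, prob p f a * Real.log (prob p f a)
      = ∑ z : α × (∀ j, W j), PJ z * Real.log (prob p f z.1) :=
    my_marg p (fun ω => (f ω, joint Y ω)) Prod.fst (fun a => Real.log (prob p f a))
  have term : ∀ z : α × (∀ j, W j),
      ∑ j, PJ z * Real.log (pj j (z.1, z.2 j))
        = PJ z * Real.log (PJ z) + ((m - 1 : ℕ) : ℝ) * (PJ z * Real.log (prob p f z.1)) := by
    intro z
    rcases (hPJ0 z).lt_or_eq with h | h
    · have hjne : ∀ j, pj j (z.1, z.2 j) ≠ 0 := fun j => (lt_of_lt_of_le h (hle_j z j)).ne'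
      have hfne : prob p f z.1 ≠ 0 := (lt_of_lt_of_le h (hle_f z)).ne'
      have hprod : ∏ j, pj j (z.1, z.2 j) = prob p f z.1 ^ (m - 1) * PJ z := by
        rw [← hrep z.1 z.2]
      have : ∑ j, Real.log (pj j (z.1, z.2 j))
          = ((m - 1 : ℕ) : ℝ) * Real.log (prob p f z.1) + Real.log (PJ z) := by
        rw [← Real.log_prod (fun j _ => hjne j), hprod,
          Real.log_mul (pow_ne_zero _ hfne) h.ne', Real.log_pow]
      rw [← Finset.mul_sum, this]
      ring
    · simp [← h]
  -- put it together
  have key : ∑ j, ∑ w : α × W j, pj j w * Real.log (pj j w)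
      = (∑ z, PJ z * Real.log (PJ z))
        + ((m - 1 : ℕ) : ℝ) * ∑ a, prob p f a * Real.log (prob p f a) := by
    simp only [hmarg]
    rw [Finset.sum_comm, Finset.sum_congr rfl fun z _ => term z, Finset.sum_add_distrib,
      ← Finset.mul_sum, hmargf]
  unfold ent
  have hPJ' : ∀ z, prob p (fun ω => (f ω, joint Y ω)) z = PJ z := fun _ => rfl
  have hpj' : ∀ j w, prob p (fun ω => (f ω, Y j ω)) w = pj j w := fun _ _ => rfl
  simp only [hPJ', hpj']
  simp only [Finset.sum_neg_distrib]
  linarith [key]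

end More
section ID
variable {Ω : Type} [Fintype Ω]

lemma my_ID {n mm : ℕ} {V : Fin n → Type} [∀ i, Fintype (V i)] [∀ i, DecidableEq (V i)]
    {W : Fin mm → Type} [∀ j, Fintype (W j)] [∀ j, DecidableEq (W j)]
    (p : Ω → ℝ) (hp0 : ∀ ω, 0 ≤ p ω) (X : ∀ i, Ω → V i) (Yj : ∀ j, Ω → W j)
    (hrep : IsRepresentation p (joint X) Yj) :
    tc p X = tcCond p X (joint Yj) + tc p Yj + tcL p X Yj := by
  have hstar : ∑ j, ent p (fun ω => (joint X ω, Yj j ω))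
      = ent p (fun ω => (joint X ω, joint Yj ω)) + ((mm : ℝ) - 1) * ent p (joint X) := by
    rcases Nat.eq_zero_or_pos mm with hmm | hmm
    · subst hmm
      have heq : (fun ω => (joint X ω, (fun j : Fin 0 => j.elim0 : ∀ j, W j)))
          = (fun ω => (joint X ω, joint Yj ω)) := by
        funext ω; exact Prod.ext rfl (Subsingleton.elim _ _)
      have := my_ent_comp_inj p (joint X)
        (fun a => (a, (fun j : Fin 0 => j.elim0 : ∀ j, W j)))
        (fun a b h => congrArg Prod.fst h)
      rw [heq] at this
      rw [this]
      simp
    · have := my_star p hp0 (joint X) Yj hrep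
      rw [this, Nat.cast_sub hmm]
      norm_num
  have hswap1 : ∑ i, mi p (joint Yj) (X i)
      = ∑ i, (ent p (joint Yj) + ent p (X i) - ent p (fun ω => (X i ω, joint Yj ω))) := by
    refine Finset.sum_congr rfl fun i _ => ?_
    unfold mi
    rw [my_ent_pair_swap p (joint Yj) (X i)]
  have hswap2 : ∑ j, mi p (Yj j) (joint X)
      = ∑ j, (ent p (Yj j) + ent p (joint X) - ent p (fun ω => (joint X ω, Yj j ω))) := by
    refine Finset.sum_congr rfl fun j _ => ?_
    unfold mi
    rw [my_ent_pair_swap p (Yj j) (joint X)]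
  unfold tc tcCond tcL condEnt
  rw [hswap1, hswap2]
  simp only [Finset.sum_add_distrib, Finset.sum_sub_distrib, Finset.sum_const,
    Finset.card_univ, Fintype.card_fin, nsmul_eq_mul]
  linarith [hstar]

end ID
section Main
variable {Ω : Type} [Fintype Ω]

lemma my_telescope (r : ℕ) (m : ℕ → ℕ) (W : (k : ℕ) → Fin (m k) → Type)
    [∀ k j, Fintype (W k j)] [∀ k j, DecidableEq (W k j)]
    (p : Ω → ℝ) (hp0 : ∀ ω, 0 ≤ p ω)
    (Y : (k : ℕ) → (j : Fin (m k)) → Ω → W k j)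
    (hrep : ∀ k < r, IsRepresentation p (joint (Y k)) (Y (k + 1))) :
    tc p (Y 0) = (∑ k ∈ Finset.range r,
        (tcCond p (Y k) (joint (Y (k + 1))) + tcL p (Y k) (Y (k + 1)))) + tc p (Y r) := by
  induction r with
  | zero => simp
  | succ r ih =>
    rw [Finset.sum_range_succ, ih (fun k hk => hrep k (by omega))]
    have := my_ID p hp0 (Y r) (Y (r + 1)) (hrep r (by omega))
    linarith

theorem stmt_11' {Ω : Type} [Fintype Ω] (r : ℕ)
    (m : ℕ → ℕ) (W : (k : ℕ) → Fin (m k) → Type)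
    [∀ k j, Fintype (W k j)] [∀ k j, DecidableEq (W k j)]
    (p : Ω → ℝ) (hp0 : ∀ ω, 0 ≤ p ω) (hp1 : ∑ ω, p ω = 1)
    (Y : (k : ℕ) → (j : Fin (m k)) → Ω → W k j)
    (hrep : ∀ k < r, IsRepresentation p (joint (Y k)) (Y (k + 1))) :
    ent p (joint (Y 0))
        ≤ (∑ i, ent p (Y 0 i)) - ∑ k ∈ Finset.range r, tcL p (Y k) (Y (k + 1))
      ∧ (m r = 1 →
          (∑ i, ent p (Y 0 i)) - ∑ k ∈ Finset.range r,
              (tcL p (Y k) (Y (k + 1)) + ∑ i, condEnt p (Y k i) (joint (Y (k + 1))))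
            ≤ ent p (joint (Y 0))) := by
  have htc : tc p (Y 0) = (∑ i, ent p (Y 0 i)) - ent p (joint (Y 0)) := rfl
  have htel := my_telescope r m W p hp0 Y hrep
  constructor
  · have h1 : ∑ k ∈ Finset.range r, tcL p (Y k) (Y (k + 1))
        ≤ ∑ k ∈ Finset.range r, (tcCond p (Y k) (joint (Y (k + 1))) + tcL p (Y k) (Y (k + 1))) :=
      Finset.sum_le_sum fun k _ => by
        have := my_tcCond_nonneg p hp0 hp1 (Y k) (joint (Y (k + 1)))
        linarith
    have h2 := my_tc_nonneg p hp0 hp1 (Y r)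
    linarith
  · intro hmr
    have h3 : tc p (Y r) = 0 := my_tc_single hmr p (Y r)
    have h4 : ∑ k ∈ Finset.range r, (tcCond p (Y k) (joint (Y (k + 1))) + tcL p (Y k) (Y (k + 1)))
        ≤ ∑ k ∈ Finset.range r,
            (tcL p (Y k) (Y (k + 1)) + ∑ i, condEnt p (Y k i) (joint (Y (k + 1)))) := by
      refine Finset.sum_le_sum fun k _ => ?_
      have h5 := my_condEnt_nonneg p hp0 (joint (Y k)) (joint (Y (k + 1)))
      have h6 : tcCond p (Y k) (joint (Y (k + 1)))
          = (∑ i, condEnt p (Y k i) (joint (Y (k + 1))))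
            - condEnt p (joint (Y k)) (joint (Y (k + 1))) := rfl
      linarith
    linarith

end Main

/-- Bounds on `H(X)`: if `Y¹,…,Yʳ` is a hierarchical representation of `X`
(here `Y 0 = X`, all variables finite-valued), then
`H(X) ≤ ∑ᵢ H(Xᵢ) − ∑ₖ TC_L(Y^{k-1};Y^k)`; and if moreover the top layer consists of a
single variable (`m r = 1`), then
`H(X) ≥ ∑ᵢ H(Xᵢ) − ∑ₖ ( TC_L(Y^{k-1};Y^k) + ∑ᵢ H(Y^{k-1}ᵢ|Y^k) )`. -/
theorem stmt_11 {Ω : Type} [Fintype Ω] (r : ℕ)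
    (m : ℕ → ℕ) (W : (k : ℕ) → Fin (m k) → Type)
    [∀ k j, Fintype (W k j)] [∀ k j, DecidableEq (W k j)]
    (p : Ω → ℝ) (hp0 : ∀ ω, 0 ≤ p ω) (hp1 : ∑ ω, p ω = 1)
    (Y : (k : ℕ) → (j : Fin (m k)) → Ω → W k j)
    (hrep : ∀ k < r, IsRepresentation p (joint (Y k)) (Y (k + 1))) :
    ent p (joint (Y 0))
        ≤ (∑ i, ent p (Y 0 i)) - ∑ k ∈ Finset.range r, tcL p (Y k) (Y (k + 1))
      ∧ (m r = 1 →
          (∑ i, ent p (Y 0 i)) - ∑ k ∈ Finset.range r,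
              (tcL p (Y k) (Y (k + 1)) + ∑ i, condEnt p (Y k i) (joint (Y (k + 1))))
            ≤ ent p (joint (Y 0))) := by
  exact stmt_11' r m W p hp0 hp1 Y hrep
end

section
/- Let Y = (Y_1,...,Y_m) be a representation of X = (X_1,...,X_n), and let α_{i,j} be nonnegative real numbers with Σ_{j=1}^m α_{i,j} = 1 for every i. Then Σ_{j=1}^m α_{i,j} I(Y_j : X_i) ≤ I(Y : X_i) for every i, and consequently TC_L(X;Y) ≥ Σ_{j=1}^m ( Σ_{i=1}^n α_{i,j} I(Y_j : X_i) − I(Y_j : X) ). -/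
open Finset

section Aux

set_option linter.unusedSectionVars false

lemma log_sum_ineq {ι : Type*} (s : Finset ι) (q Q : ι → ℝ)
    (hq : ∀ b ∈ s, 0 ≤ q b) (hle : ∀ b ∈ s, q b ≤ Q b) :
    (∑ b ∈ s, q b) * (Real.log (∑ b ∈ s, q b) - Real.log (∑ b ∈ s, Q b))
      ≤ ∑ b ∈ s, q b * (Real.log (q b) - Real.log (Q b)) := by
  have hQ0 : ∀ b ∈ s, 0 ≤ Q b := fun b hb => le_trans (hq b hb) (hle b hb)
  set S := ∑ b ∈ s, Q b with hS
  rcases eq_or_lt_of_le (Finset.sum_nonneg hQ0) with h0 | hpos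
  · have hQz : ∀ b ∈ s, Q b = 0 :=
      (Finset.sum_eq_zero_iff_of_nonneg hQ0).mp h0.symm
    have hqz : ∀ b ∈ s, q b = 0 := fun b hb =>
      le_antisymm (by rw [← hQz b hb]; exact hle b hb) (hq b hb)
    have h1 : ∀ b ∈ s, q b * (Real.log (q b) - Real.log (Q b)) = 0 :=
      fun b hb => by rw [hqz b hb]; ring
    rw [Finset.sum_eq_zero h1, Finset.sum_eq_zero hqz]
    simp
  · set w : ι → ℝ := fun b => Q b / S with hw
    set x : ι → ℝ := fun b => if Q b = 0 then 0 else q b / Q b with hx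
    have hw0 : ∀ b ∈ s, 0 ≤ w b := fun b hb => div_nonneg (hQ0 b hb) hpos.le
    have hw1 : ∑ b ∈ s, w b = 1 := by
      rw [hw]; rw [← Finset.sum_div]; exact div_self hpos.ne'
    have hmem : ∀ b ∈ s, x b ∈ Set.Ici (0:ℝ) := by
      intro b hb
      simp only [hx, Set.mem_Ici]
      split
      · exact le_refl 0
      · exact div_nonneg (hq b hb) (hQ0 b hb)
    have hJ := Real.convexOn_mul_log.map_sum_le hw0 hw1 hmem
    simp only [smul_eq_mul] at hJ
    set T := ∑ b ∈ s, q b with hT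
    have hqQ0 : ∀ b ∈ s, Q b = 0 → q b = 0 := fun b hb h =>
      le_antisymm (h ▸ hle b hb) (hq b hb)
    have e1 : ∑ b ∈ s, w b * x b = T / S := by
      rw [hT, Finset.sum_div]
      apply Finset.sum_congr rfl
      intro b hb
      by_cases h : Q b = 0
      · simp [hw, hx, h, hqQ0 b hb h]
      · simp only [hw, hx, if_neg h]
        field_simp
    have e2 : ∑ b ∈ s, w b * (x b * Real.log (x b))
        = (∑ b ∈ s, q b * (Real.log (q b) - Real.log (Q b))) / S := by
      rw [Finset.sum_div]
      apply Finset.sum_congr rfl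
      intro b hb
      by_cases h : Q b = 0
      · simp [hw, hx, h, hqQ0 b hb h]
      · by_cases h2 : q b = 0
        · simp [hw, hx, h, h2]
        · simp only [hw, hx, if_neg h]
          rw [Real.log_div h2 h]
          field_simp
    rw [e1, e2] at hJ
    by_cases hT0 : T = 0
    · rw [hT0] at hJ ⊢
      simp only [zero_div, Real.log_zero, mul_zero, zero_mul] at hJ ⊢
      have := mul_le_mul_of_nonneg_left hJ hpos.le
      rw [mul_zero] at this
      calc (0:ℝ) = S * 0 := by ring
        _ ≤ S * ((∑ b ∈ s, q b * (Real.log (q b) - Real.log (Q b))) / S) :=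
            mul_le_mul_of_nonneg_left hJ hpos.le
        _ = _ := by have hS0 : S ≠ 0 := hpos.ne'; field_simp
    · have heq : T * (Real.log T - Real.log S) = S * (T / S * Real.log (T / S)) := by
        have hS0 : S ≠ 0 := hpos.ne'
        rw [Real.log_div hT0 hS0]
        field_simp
      rw [heq]
      calc S * (T / S * Real.log (T / S))
          ≤ S * ((∑ b ∈ s, q b * (Real.log (q b) - Real.log (Q b))) / S) :=
            mul_le_mul_of_nonneg_left hJ hpos.le
        _ = _ := by have hS0 : S ≠ 0 := hpos.ne'; field_simp

variable {Ω A B C : Type} [Fintype Ω] [Fintype A] [DecidableEq A]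
  [Fintype B] [DecidableEq B] [Fintype C] [DecidableEq C]


variable {Ω A B C : Type} [Fintype Ω] [Fintype A] [DecidableEq A]
  [Fintype B] [DecidableEq B] [Fintype C] [DecidableEq C]

lemma prob_nonneg (p : Ω → ℝ) (hp0 : ∀ ω, 0 ≤ p ω) (f : Ω → A) (a : A) :
    0 ≤ prob p f a :=
  Finset.sum_nonneg fun ω _ => by split <;> [exact hp0 ω; exact le_refl 0]

lemma prob_pair_fst (p : Ω → ℝ) (f : Ω → A) (g : Ω → B) (b : B) :
    ∑ a, prob p (fun ω => (g ω, f ω)) (b, a) = prob p g b := by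
  unfold prob
  rw [Finset.sum_comm]
  apply Finset.sum_congr rfl
  intro ω _
  simp [Prod.ext_iff, ite_and, Finset.sum_ite_eq]

lemma prob_comp (p : Ω → ℝ) (g : Ω → B) (ψ : B → C) (c : C) :
    prob p (fun ω => ψ (g ω)) c = ∑ b, if ψ b = c then prob p g b else 0 := by
  unfold prob
  have h : ∀ b : B, (if ψ b = c then ∑ ω : Ω, (if g ω = b then p ω else 0) else 0)
      = ∑ ω : Ω, (if ψ b = c then (if g ω = b then p ω else 0) else 0) := by
    intro b; split <;> simp
  simp only [h]
  rw [Finset.sum_comm]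
  refine Finset.sum_congr rfl fun ω _ => ?_
  rw [Finset.sum_eq_single (g ω)]
  · simp
  · intro b _ hne; simp [Ne.symm hne]
  · simp

lemma prob_comp_pair (p : Ω → ℝ) (f : Ω → A) (g : Ω → B) (ψ : B → C) (c : C) (a : A) :
    prob p (fun ω => (ψ (g ω), f ω)) (c, a)
      = ∑ b, if ψ b = c then prob p (fun ω => (g ω, f ω)) (b, a) else 0 := by
  unfold prob
  have h : ∀ b : B, (if ψ b = c then ∑ ω : Ω, (if (g ω, f ω) = (b, a) then p ω else 0) else 0)
      = ∑ ω : Ω, (if ψ b = c then (if (g ω, f ω) = (b, a) then p ω else 0) else 0) := by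
    intro b; split <;> simp
  simp only [h]
  rw [Finset.sum_comm]
  refine Finset.sum_congr rfl fun ω _ => ?_
  rw [Finset.sum_eq_single (g ω)]
  · simp [Prod.ext_iff, ite_and]
  · intro b _ hne; simp [Prod.ext_iff, Ne.symm hne]
  · simp

lemma mi_comp_le (p : Ω → ℝ) (hp0 : ∀ ω, 0 ≤ p ω) (f : Ω → A) (g : Ω → B) (ψ : B → C) :
    mi p (fun ω => ψ (g ω)) f ≤ mi p g f := by
  set q : B → A → ℝ := fun b a => prob p (fun ω => (g ω, f ω)) (b, a) with hq
  set P : B → ℝ := fun b => prob p g b with hP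
  set r : C → A → ℝ := fun c a => prob p (fun ω => (ψ (g ω), f ω)) (c, a) with hr
  set R : C → ℝ := fun c => prob p (fun ω => ψ (g ω)) c with hR
  have hq0 : ∀ b a, 0 ≤ q b a := fun b a => prob_nonneg p hp0 _ _
  have hPq : ∀ b, P b = ∑ a, q b a := fun b => (prob_pair_fst p f g b).symm
  have hqP : ∀ b a, q b a ≤ P b := by
    intro b a
    rw [hPq]
    exact Finset.single_le_sum (fun a' _ => hq0 b a') (Finset.mem_univ a)
  have hrq : ∀ c a, r c a = ∑ b, if ψ b = c then q b a else 0 :=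
    fun c a => prob_comp_pair p f g ψ c a
  have hRP : ∀ c, R c = ∑ b, if ψ b = c then P b else 0 :=
    fun c => prob_comp p g ψ c
  -- key inequality
  have key : ∀ a, ∑ c, r c a * (Real.log (r c a) - Real.log (R c))
      ≤ ∑ b, q b a * (Real.log (q b a) - Real.log (P b)) := by
    intro a
    have step : ∀ c, r c a * (Real.log (r c a) - Real.log (R c))
        ≤ ∑ b, if ψ b = c then q b a * (Real.log (q b a) - Real.log (P b)) else 0 := by
      intro c
      have h := log_sum_ineq Finset.univ (fun b => if ψ b = c then q b a else 0)
        (fun b => if ψ b = c then P b else 0)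
        (fun b _ => by split <;> [exact hq0 b a; exact le_refl 0])
        (fun b _ => by split <;> [exact hqP b a; exact le_refl 0])
      rw [← hrq, ← hRP] at h
      refine h.trans_eq (Finset.sum_congr rfl fun b _ => ?_)
      by_cases hbc : ψ b = c <;> simp [hbc]
    calc ∑ c, r c a * (Real.log (r c a) - Real.log (R c))
        ≤ ∑ c, ∑ b, (if ψ b = c then q b a * (Real.log (q b a) - Real.log (P b)) else 0) :=
          Finset.sum_le_sum fun c _ => step c
      _ = ∑ b, q b a * (Real.log (q b a) - Real.log (P b)) := by
          rw [Finset.sum_comm]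
          exact Finset.sum_congr rfl fun b _ => by simp
  have key2 : ∑ a, ∑ c, r c a * (Real.log (r c a) - Real.log (R c))
      ≤ ∑ a, ∑ b, q b a * (Real.log (q b a) - Real.log (P b)) :=
    Finset.sum_le_sum fun a _ => key a
  -- rewrite entropies
  have eg : ent p g = -∑ b, P b * Real.log (P b) := rfl
  have egf : ent p (fun ω => (g ω, f ω)) = -∑ b, ∑ a, q b a * Real.log (q b a) := by
    unfold ent; rw [Fintype.sum_prod_type]
  have eh : ent p (fun ω => ψ (g ω)) = -∑ c, R c * Real.log (R c) := rfl
  have ehf : ent p (fun ω => (ψ (g ω), f ω)) = -∑ c, ∑ a, r c a * Real.log (r c a) := by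
    unfold ent; rw [Fintype.sum_prod_type]
  have eP : ∑ b, P b * Real.log (P b) = ∑ a, ∑ b, q b a * Real.log (P b) := by
    rw [Finset.sum_comm]
    exact Finset.sum_congr rfl fun b _ => by rw [hPq, Finset.sum_mul]
  have eR : ∑ c, R c * Real.log (R c) = ∑ a, ∑ c, r c a * Real.log (R c) := by
    rw [Finset.sum_comm]
    refine Finset.sum_congr rfl fun c _ => ?_
    have : R c = ∑ a, r c a := by
      rw [hR, hr]
      exact (prob_pair_fst p f (fun ω => ψ (g ω)) c).symm
    rw [this, Finset.sum_mul]
  have eq1 : ∑ b, ∑ a, q b a * Real.log (q b a)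
      = ∑ a, ∑ b, q b a * Real.log (q b a) := Finset.sum_comm
  have eq2 : ∑ c, ∑ a, r c a * Real.log (r c a)
      = ∑ a, ∑ c, r c a * Real.log (r c a) := Finset.sum_comm
  have k3 : (∑ a, ∑ c, r c a * Real.log (r c a)) - (∑ a, ∑ c, r c a * Real.log (R c))
      ≤ (∑ a, ∑ b, q b a * Real.log (q b a)) - (∑ a, ∑ b, q b a * Real.log (P b)) := by
    simpa [mul_sub, Finset.sum_sub_distrib] using key2
  simp only [mi]
  rw [eg, egf, eh, ehf]
  linarith

end Aux

/-- if `Y` is a representation of `X` and the nonnegative reals `α i j`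
satisfy `∑ⱼ α i j = 1` for every `i`, then `∑ⱼ α i j · I(Yⱼ:Xᵢ) ≤ I(Y:Xᵢ)` for every `i`,
and consequently `TC_L(X;Y) ≥ ∑ⱼ ( ∑ᵢ α i j · I(Yⱼ:Xᵢ) − I(Yⱼ:X) )`. -/
theorem stmt_15 {Ω : Type} [Fintype Ω] {n m : ℕ}
    {V : Fin n → Type} [∀ i, Fintype (V i)] [∀ i, DecidableEq (V i)]
    {W : Fin m → Type} [∀ j, Fintype (W j)] [∀ j, DecidableEq (W j)]
    (p : Ω → ℝ) (hp0 : ∀ ω, 0 ≤ p ω) (hp1 : ∑ ω, p ω = 1)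
    (X : ∀ i, Ω → V i) (Y : ∀ j, Ω → W j)
    (hrep : IsRepresentation p (joint X) Y)
    (α : Fin n → Fin m → ℝ) (hα0 : ∀ i j, 0 ≤ α i j)
    (hα1 : ∀ i, ∑ j, α i j = 1) :
    (∀ i, ∑ j, α i j * mi p (Y j) (X i) ≤ mi p (joint Y) (X i))
      ∧ ∑ j, ((∑ i, α i j * mi p (Y j) (X i)) - mi p (Y j) (joint X)) ≤ tcL p X Y := by
  constructor
  · intro i
    have hij : ∀ j, mi p (Y j) (X i) ≤ mi p (joint Y) (X i) := fun j =>
      mi_comp_le p hp0 (X i) (joint Y) (fun y => y j)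
    calc ∑ j, α i j * mi p (Y j) (X i)
        ≤ ∑ j, α i j * mi p (joint Y) (X i) :=
          Finset.sum_le_sum fun j _ =>
            mul_le_mul_of_nonneg_left (hij j) (hα0 i j)
      _ = mi p (joint Y) (X i) := by rw [← Finset.sum_mul, hα1 i, one_mul]
  · have h1 : ∀ i, ∑ j, α i j * mi p (Y j) (X i) ≤ mi p (joint Y) (X i) := by
      intro i
      have hij : ∀ j, mi p (Y j) (X i) ≤ mi p (joint Y) (X i) := fun j =>
        mi_comp_le p hp0 (X i) (joint Y) (fun y => y j)
      calc ∑ j, α i j * mi p (Y j) (X i)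
          ≤ ∑ j, α i j * mi p (joint Y) (X i) :=
            Finset.sum_le_sum fun j _ =>
              mul_le_mul_of_nonneg_left (hij j) (hα0 i j)
        _ = mi p (joint Y) (X i) := by rw [← Finset.sum_mul, hα1 i, one_mul]
    rw [Finset.sum_sub_distrib]
    unfold tcL
    apply sub_le_sub_right
    rw [Finset.sum_comm]
    exact Finset.sum_le_sum fun i _ => h1 i
end
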